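/- For each μ ∈ Λ, the set A_μ = Σ_{λ⊆μ} N_λ (the linear span of ⋃_{λ⊆μ} N_λ) is a finite-dimensional *-subalgebra of ∏_{ν∈Λ} M_ν; for λ ⊆ μ in Λ one has A_λ ⊆ A_μ; and the closure of ⋃_{μ∈Λ} A_μ equals A. Consequently A is an AF-algebra (it has a directed family of finite-dimensional C*-subalgebras whose union is dense). -/

import Mathlib

open scoped Matrix.Norms.L2Operator ENNReal

noncomputable section
set_option synthInstance.maxHeartbeats 1000000
set_option maxHeartbeats 2000000
set_option linter.unusedSectionVars false

instance matrixNormedStarGroup {n : Type*} [Fintype n] [DecidableEq n] :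
    NormedStarGroup (Matrix n n ℂ) := CStarRing.to_normedStarGroup

/-- a self-adjoint idempotent in a C*-algebra has norm at most one. -/
lemma norm_le_one_of_proj {E : Type*} [NonUnitalNormedRing E] [StarRing E] [CStarRing E]
    {p : E} (h1 : star p = p) (h2 : p * p = p) : ‖p‖ ≤ 1 := by
  have h := CStarRing.norm_star_mul_self (x := p)
  rw [h1, h2] at h
  nlinarith [norm_nonneg p]

lemma star_stdBasisMatrix' {n : Type*} [Fintype n] [DecidableEq n] (a b : n) :
    star (Matrix.single a b (1 : ℂ)) = Matrix.single b a 1 := by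
  ext i j
  simp only [Matrix.star_apply, Matrix.single, Matrix.of_apply]
  by_cases h1 : a = j <;> by_cases h2 : b = i <;> simp [h1, h2, and_comm]

lemma mul_collapse {n ι : Type*} [Fintype n] [DecidableEq n] [Fintype ι] [DecidableEq ι]
    {f g k : ι → n} (hg : Function.Injective g) :
    (∑ u : ι, Matrix.single (f u) (g u) (1 : ℂ)) *
      (∑ u : ι, Matrix.single (g u) (k u) (1 : ℂ)) =
      ∑ u : ι, Matrix.single (f u) (k u) (1 : ℂ) := by
  rw [Finset.sum_mul_sum]
  refine Finset.sum_congr rfl fun u _ => ?_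
  rw [Finset.sum_eq_single u]
  · rw [Matrix.single_mul_single_same, one_mul]
  · intro u' _ hne
    rw [Matrix.single_mul_single_of_ne]; exact hg.ne (Ne.symm hne)
  · intro hu
    exact absurd (Finset.mem_univ u) hu

lemma norm_sum_std_le_one {n ι : Type*} [Fintype n] [DecidableEq n] [Fintype ι] [DecidableEq ι]
    {f g : ι → n} (hf : Function.Injective f) (hg : Function.Injective g) :
    ‖∑ u : ι, Matrix.single (f u) (g u) (1 : ℂ)‖ ≤ 1 := by
  set v := ∑ u : ι, Matrix.single (f u) (g u) (1 : ℂ) with hv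
  have hstar : star v = ∑ u : ι, Matrix.single (g u) (f u) (1 : ℂ) := by
    rw [hv, star_sum]
    exact Finset.sum_congr rfl fun u _ => star_stdBasisMatrix' _ _
  have hvv : star v * v = ∑ u : ι, Matrix.single (g u) (g u) (1 : ℂ) := by
    rw [hstar, hv]; exact mul_collapse hf
  have hproj : (∑ u : ι, Matrix.single (g u) (g u) (1 : ℂ)) *
      (∑ u : ι, Matrix.single (g u) (g u) (1 : ℂ)) =
      ∑ u : ι, Matrix.single (g u) (g u) (1 : ℂ) := mul_collapse hg
  have hprojstar : star (∑ u : ι, Matrix.single (g u) (g u) (1 : ℂ)) =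
      ∑ u : ι, Matrix.single (g u) (g u) (1 : ℂ) := by
    rw [star_sum]
    exact Finset.sum_congr rfl fun u _ => star_stdBasisMatrix' _ _
  have h1 : ‖star v * v‖ ≤ 1 := by
    rw [hvv]; exact norm_le_one_of_proj hprojstar hproj
  have h2 : ‖star v * v‖ = ‖v‖ * ‖v‖ := CStarRing.norm_star_mul_self
  nlinarith [norm_nonneg v]

variable {X : Type*} [DecidableEq X]

/-- `l(λ)`: the set of bijections `t : {1,…,n} → λ` where `n = |λ|`, realized as the
equivalences `Fin λ.card ≃ λ`; in particular `l(∅)` is a one-point set. -/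
abbrev Lbl (lam : Finset X) : Type _ := Fin lam.card ≃ {x // x ∈ lam}

/-- `M_λ`: a copy of the C*-algebra of `n! × n!` complex matrices (`n = |λ|`), with the
matrix unit `{e^{(λ)}_{s,t}}` indexed by `s, t ∈ l(λ)` (the standard basis matrices),
endowed with the operator norm. -/
abbrev Mlam (lam : Finset X) : Type _ := Matrix (Lbl lam) (Lbl lam) ℂ

/-- The bounded product `∏_{μ∈Λ} M_μ` with the supremum norm. -/
abbrev ProdM (X : Type*) [DecidableEq X] : Type _ := lp (fun mu : Finset X => Mlam mu) ∞

/-- For disjoint finsets, `λ ∪ μ` is in bijection with `λ ⊕ μ`. -/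
def unionEquiv {lam mu : Finset X} (h : Disjoint lam mu) :
    ({x // x ∈ lam} ⊕ {x // x ∈ mu}) ≃ {x // x ∈ lam ∪ mu} :=
  (Equiv.Set.union (Finset.disjoint_coe.mpr h)).symm.trans
    (Equiv.subtypeEquivRight fun x => by simp)

/-- The concatenation `ts ∈ l(λ∪μ)` of `t ∈ l(λ)` and `s ∈ l(μ)`, for disjoint `λ`, `μ`:
`(ts)(i) = t(i)` for `1 ≤ i ≤ n` and `(ts)(i) = s(i-n)` for `n < i ≤ n+m`. -/
def concat {lam mu : Finset X} (h : Disjoint lam mu) (t : Lbl lam) (s : Lbl mu) :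
    Lbl (lam ∪ mu) :=
  (finCongr (Finset.card_union_of_disjoint h)).trans
    ((finSumFinEquiv.symm).trans ((Equiv.sumCongr t s).trans (unionEquiv h)))

/-- Transport of labellings along an equality of finsets. -/
def lblCast {lam mu : Finset X} (h : lam = mu) : Lbl lam ≃ Lbl mu :=
  Equiv.cast (by rw [h])

/-- `su ∈ l(μ)`: the concatenation of `s ∈ l(λ)` and `u ∈ l(μ∖λ)`, for `λ ⊆ μ`. -/
def extLbl {lam mu : Finset X} (h : lam ⊆ mu) (s : Lbl lam) (u : Lbl (mu \ lam)) : Lbl mu :=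
  lblCast (Finset.union_sdiff_of_subset h) (concat Finset.disjoint_sdiff s u)

lemma concat_right_injective {lam mu : Finset X} (h : Disjoint lam mu) (t : Lbl lam) :
    Function.Injective fun s : Lbl mu => concat h t s := by
  intro u u' he
  ext j
  have h1 := congrArg (fun e : Lbl (lam ∪ mu) =>
    e ((finCongr (Finset.card_union_of_disjoint h)).symm (finSumFinEquiv (Sum.inr j)))) he
  simp only [concat, Equiv.trans_apply, Equiv.apply_symm_apply, Equiv.symm_apply_apply,
    Equiv.sumCongr_apply, Sum.map_inr] at h1
  have h2 := (unionEquiv h).injective h1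
  simpa using congrArg Subtype.val (Sum.inr.inj h2)

lemma extLbl_right_injective {lam mu : Finset X} (h : lam ⊆ mu) (s : Lbl lam) :
    Function.Injective fun u : Lbl (mu \ lam) => extLbl h s u := by
  intro u u' he
  exact concat_right_injective Finset.disjoint_sdiff s
    ((lblCast (Finset.union_sdiff_of_subset h)).injective he)

/-- `ι_{μ,λ} : M_λ → M_μ` (for `λ ⊆ μ`): the *-homomorphism determined by
`ι_{μ,λ}(e^{(λ)}_{s,t}) = ∑_{u ∈ l(μ∖λ)} e^{(μ)}_{su,tu}` and linearity. -/
def iotaMat {lam mu : Finset X} (h : lam ⊆ mu) (x : Mlam lam) : Mlam mu :=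
  ∑ s : Lbl lam, ∑ t : Lbl lam, ∑ u : Lbl (mu \ lam),
    x s t • Matrix.single (extLbl h s u) (extLbl h t u) (1 : ℂ)

lemma norm_iotaMat_le {lam mu : Finset X} (h : lam ⊆ mu) (x : Mlam lam) :
    ‖iotaMat h x‖ ≤ ∑ s : Lbl lam, ∑ t : Lbl lam, ‖x s t‖ := by
  refine (norm_sum_le _ _).trans (Finset.sum_le_sum fun s _ => ?_)
  refine (norm_sum_le _ _).trans (Finset.sum_le_sum fun t _ => ?_)
  rw [← Finset.smul_sum, norm_smul]
  calc ‖x s t‖ * ‖∑ u : Lbl (mu \ lam),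
        Matrix.single (extLbl h s u) (extLbl h t u) (1 : ℂ)‖
      ≤ ‖x s t‖ * 1 := by
        refine mul_le_mul_of_nonneg_left ?_ (norm_nonneg _)
        exact norm_sum_std_le_one (extLbl_right_injective h s) (extLbl_right_injective h t)
    _ = ‖x s t‖ := mul_one _

lemma memℓp_iota (lam : Finset X) (x : Mlam lam) :
    Memℓp (fun mu : Finset X => (if h : lam ⊆ mu then iotaMat h x else 0 : Mlam mu)) ∞ := by
  apply memℓp_infty
  refine ⟨∑ s : Lbl lam, ∑ t : Lbl lam, ‖x s t‖, ?_⟩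
  rintro r ⟨mu, rfl⟩
  dsimp only
  split_ifs with h
  · exact norm_iotaMat_le h x
  · simp only [norm_zero]
    positivity

/-- `ι_λ : M_λ → ∏_{μ∈Λ} M_μ`: `ι_λ(x)(μ) = ι_{μ,λ}(x)` if `λ ⊆ μ`, and `0` otherwise. -/
def iotaElem (lam : Finset X) (x : Mlam lam) : ProdM X :=
  ⟨fun mu => (if h : lam ⊆ mu then iotaMat h x else 0 : Mlam mu), memℓp_iota lam x⟩

/-- `f^{(λ)}_{s,t} = ι_λ(e^{(λ)}_{s,t})`. -/
def fElem (lam : Finset X) (s t : Lbl lam) : ProdM X :=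
  iotaElem lam (Matrix.single s t 1)

/-- `N_λ = ι_λ(M_λ) ⊆ ∏_{μ∈Λ} M_μ`. -/
def Nlam (lam : Finset X) : Set (ProdM X) := Set.range (iotaElem lam)

/-- `A_μ = Σ_{λ⊆μ} N_λ`: the linear span of `⋃_{λ⊆μ} N_λ`. -/
def NspanUpTo (mu : Finset X) : Submodule ℂ (ProdM X) :=
  Submodule.span ℂ (⋃ lam : Finset X, ⋃ (_ : lam ⊆ mu), Nlam lam)

/-- `Σ_{λ∈Λ} N_λ`: the linear span of `⋃_{λ∈Λ} N_λ`. -/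
def Nspan (X : Type*) [DecidableEq X] : Submodule ℂ (ProdM X) :=
  Submodule.span ℂ (⋃ lam : Finset X, Nlam lam)

/-- `A`: the closure of `Σ_{λ∈Λ} N_λ` in `∏_{μ∈Λ} M_μ`. -/
def carrierA (X : Type*) [DecidableEq X] : Set (ProdM X) :=
  closure ((Nspan X : Submodule ℂ (ProdM X)) : Set (ProdM X))

lemma card_sdiff_lemma {lam mu : Finset X} (h : lam ⊆ mu) :
    lam.card + (mu \ lam).card = mu.card := by
  rw [Finset.card_sdiff_of_subset h]
  have := Finset.card_le_card h
  omega

lemma concat_val {lam mu : Finset X} (h : Disjoint lam mu) (t : Lbl lam) (s : Lbl mu)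
    (i : Fin (lam ∪ mu).card) :
    ((concat h t s i : X)) =
      if hi : (i : ℕ) < lam.card then (t ⟨i, hi⟩ : X)
      else (s ⟨i - lam.card, by
        have h1 := i.isLt
        have h2 : (lam ∪ mu).card = lam.card + mu.card := Finset.card_union_of_disjoint h
        omega⟩ : X) := by
  have hcard : (lam ∪ mu).card = lam.card + mu.card := Finset.card_union_of_disjoint h
  unfold concat
  simp only [Equiv.trans_apply, finCongr_apply]
  split_ifs with hi
  · have : (Fin.cast hcard i) = Fin.castAdd mu.card ⟨i, hi⟩ := by ext; simp
    rw [this, finSumFinEquiv_symm_apply_castAdd]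
    simp [unionEquiv, Equiv.Set.union, Equiv.Set.union']
  · have hlt : (i : ℕ) - lam.card < mu.card := by have := i.isLt; omega
    have : (Fin.cast hcard i) = Fin.natAdd lam.card ⟨(i : ℕ) - lam.card, hlt⟩ := by
      ext; simp; omega
    rw [this, finSumFinEquiv_symm_apply_natAdd]
    simp [unionEquiv, Equiv.Set.union, Equiv.Set.union']

lemma lblCast_val {lam mu : Finset X} (h : lam = mu) (t : Lbl lam) (i : Fin mu.card) :
    ((lblCast h t i : X)) = (t (Fin.cast (by rw [h]) i) : X) := by
  subst h; rfl

lemma extLbl_val {lam mu : Finset X} (h : lam ⊆ mu) (s : Lbl lam) (u : Lbl (mu \ lam))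
    (i : Fin mu.card) :
    ((extLbl h s u i : X)) =
      if hi : (i : ℕ) < lam.card then (s ⟨i, hi⟩ : X)
      else (u ⟨(i : ℕ) - lam.card, by
        have h1 := i.isLt; have h2 := card_sdiff_lemma h; omega⟩ : X) := by
  unfold extLbl
  rw [lblCast_val, concat_val]
  simp only [Fin.coe_cast]

lemma extLbl_inj2 {lam mu : Finset X} (h : lam ⊆ mu) {s s' : Lbl lam} {u u' : Lbl (mu \ lam)}
    (he : extLbl h s u = extLbl h s' u') : s = s' ∧ u = u' := by
  have hc := card_sdiff_lemma h
  constructor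
  · apply Equiv.ext; intro i
    apply Subtype.ext
    have hi : (i : ℕ) < mu.card := by have := i.isLt; omega
    have h1 := extLbl_val h s u ⟨i, hi⟩
    have h2 := extLbl_val h s' u' ⟨i, hi⟩
    rw [he] at h1
    rw [h1] at h2
    simp only [Fin.eta] at h2
    rw [dif_pos i.isLt, dif_pos i.isLt] at h2
    simpa using h2
  · apply Equiv.ext; intro j
    apply Subtype.ext
    have hj : lam.card + (j : ℕ) < mu.card := by have := j.isLt; omega
    have h1 := extLbl_val h s u ⟨lam.card + j, hj⟩
    have h2 := extLbl_val h s' u' ⟨lam.card + j, hj⟩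
    rw [he] at h1
    rw [h1] at h2
    rw [dif_neg (by simp), dif_neg (by simp)] at h2
    have hjj : lam.card + (j : ℕ) - lam.card = (j : ℕ) := by omega
    simp only [hjj] at h2
    simpa [Fin.eta] using h2

lemma exists_decomp {lam mu : Finset X} (h : lam ⊆ mu) (c : Lbl mu)
    (H : ∀ i : Fin mu.card, ((c i : X) ∈ lam ↔ (i : ℕ) < lam.card)) :
    ∃ (a : Lbl lam) (r : Lbl (mu \ lam)), c = extLbl h a r := by
  have hc := card_sdiff_lemma h
  have hle : lam.card ≤ mu.card := Finset.card_le_card h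
  set f : Fin lam.card → {x // x ∈ lam} := fun i =>
    ⟨(c ⟨i, lt_of_lt_of_le i.isLt hle⟩ : X), (H _).mpr i.isLt⟩ with hf
  have finj : Function.Injective f := by
    intro i i' hii
    simp only [hf, Subtype.mk.injEq] at hii
    have h3 := c.injective (Subtype.ext hii)
    have h4 := congrArg Fin.val h3
    simp only at h4
    exact Fin.ext h4
  set g : Fin (mu \ lam).card → {x // x ∈ mu \ lam} := fun j =>
    ⟨(c ⟨lam.card + j, by have := j.isLt; omega⟩ : X), by
      rw [Finset.mem_sdiff]
      refine ⟨(c _).2, ?_⟩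
      intro hmem
      have := (H ⟨lam.card + j, by have := j.isLt; omega⟩).mp hmem
      simp at this⟩ with hg
  have ginj : Function.Injective g := by
    intro j j' hjj
    simp only [hg, Subtype.mk.injEq] at hjj
    have h3 := c.injective (Subtype.ext hjj)
    have h4 := congrArg Fin.val h3
    simp only at h4
    exact Fin.ext (by omega)
  refine ⟨Equiv.ofBijective f ((Fintype.bijective_iff_injective_and_card f).mpr
      ⟨finj, by simp [Fintype.card_coe]⟩),
    Equiv.ofBijective g ((Fintype.bijective_iff_injective_and_card g).mpr
      ⟨ginj, by simp [Fintype.card_coe]⟩), ?_⟩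
  apply Equiv.ext; intro i
  apply Subtype.ext
  rw [extLbl_val]
  split_ifs with hi
  · show (c i : X) = _
    simp only [Equiv.ofBijective_apply, hf]
  · show (c i : X) = _
    simp only [Equiv.ofBijective_apply, hg]
    exact congrArg (fun j : Fin mu.card => ((c j : {x // x ∈ mu}) : X))
      (Fin.ext (by simp; omega))

lemma sdiff_sdiff_eq {lam nu mu : Finset X} (h1 : lam ⊆ nu) (_h2 : nu ⊆ mu) :
    mu \ nu = (mu \ lam) \ (nu \ lam) := by
  ext x
  simp only [Finset.mem_sdiff]
  constructor
  · rintro ⟨hmu, hnu⟩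
    exact ⟨⟨hmu, fun hl => hnu (h1 hl)⟩, fun hx => hnu hx.1⟩
  · rintro ⟨⟨hmu, hlam⟩, hx⟩
    refine ⟨hmu, fun hnu => hx ⟨hnu, hlam⟩⟩

/-- combine `u ∈ l(ν∖λ)` and `r ∈ l(μ∖ν)` into an element of `l(μ∖λ)` (for `λ ⊆ ν ⊆ μ`). -/
def cmb {lam nu mu : Finset X} (h1 : lam ⊆ nu) (h2 : nu ⊆ mu)
    (u : Lbl (nu \ lam)) (r : Lbl (mu \ nu)) : Lbl (mu \ lam) :=
  extLbl (Finset.sdiff_subset_sdiff h2 (Finset.Subset.refl lam)) u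
    (lblCast (sdiff_sdiff_eq h1 h2) r)

lemma assoc_extLbl {lam nu mu : Finset X} (h1 : lam ⊆ nu) (h2 : nu ⊆ mu)
    (s : Lbl lam) (u : Lbl (nu \ lam)) (r : Lbl (mu \ nu)) :
    extLbl (h1.trans h2) s (cmb h1 h2 u r) = extLbl h2 (extLbl h1 s u) r := by
  have hc1 := card_sdiff_lemma h1
  have hc2 := card_sdiff_lemma h2
  have hc3 := card_sdiff_lemma (h1.trans h2)
  have hc4 := card_sdiff_lemma (Finset.sdiff_subset_sdiff h2 (Finset.Subset.refl lam))
  apply Equiv.ext; intro i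
  apply Subtype.ext
  rw [extLbl_val, extLbl_val]
  split_ifs with hA hB hB
  · -- i < lam.card, i < nu.card
    rw [extLbl_val, dif_pos hA]
  · omega
  · -- lam.card ≤ i < nu.card
    rw [extLbl_val, dif_neg hA]
    unfold cmb
    rw [extLbl_val, dif_pos (by simp; omega)]
  · -- i ≥ nu.card
    unfold cmb
    rw [extLbl_val, dif_neg (by simp; omega), lblCast_val]
    congr 1
    exact congrArg r (Fin.ext (by simp; omega))

lemma stdMul {n : Type*} [Fintype n] [DecidableEq n] (a b c d : n) :
    Matrix.single a b (1 : ℂ) * Matrix.single c d 1 =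
      if b = c then Matrix.single a d 1 else 0 := by
  split_ifs with h
  · subst h; rw [Matrix.single_mul_single_same, one_mul]
  · rw [Matrix.single_mul_single_of_ne]; exact h

/-- `∑_{u ∈ l(μ∖λ)} e^{(μ)}_{su,tu}`. -/
def blockE {lam mu : Finset X} (h : lam ⊆ mu) (s t : Lbl lam) : Mlam mu :=
  ∑ u : Lbl (mu \ lam), Matrix.single (extLbl h s u) (extLbl h t u) (1 : ℂ)

lemma iotaMat_eq {lam mu : Finset X} (h : lam ⊆ mu) (x : Mlam lam) :
    iotaMat h x = ∑ s : Lbl lam, ∑ t : Lbl lam, x s t • blockE h s t := by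
  unfold iotaMat blockE
  simp [Finset.smul_sum]

lemma iotaMat_add {lam mu : Finset X} (h : lam ⊆ mu) (x y : Mlam lam) :
    iotaMat h (x + y) = iotaMat h x + iotaMat h y := by
  simp [iotaMat_eq, add_smul, Finset.sum_add_distrib]

lemma iotaMat_smul {lam mu : Finset X} (h : lam ⊆ mu) (c : ℂ) (x : Mlam lam) :
    iotaMat h (c • x) = c • iotaMat h x := by
  simp [iotaMat_eq, Finset.smul_sum, smul_smul]

/-- `ι_{μ,λ}` as a linear map. -/
def iotaMatL {lam mu : Finset X} (h : lam ⊆ mu) : Mlam lam →ₗ[ℂ] Mlam mu where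
  toFun := iotaMat h
  map_add' := iotaMat_add h
  map_smul' := iotaMat_smul h

lemma iotaMat_stdBasis {lam mu : Finset X} (h : lam ⊆ mu) (a b : Lbl lam) :
    iotaMat h (Matrix.single a b 1) = blockE h a b := by
  rw [iotaMat_eq]
  rw [Finset.sum_eq_single a]
  · rw [Finset.sum_eq_single b]
    · simp [Matrix.single]
    · intro t _ ht
      simp [Matrix.single, Ne.symm ht]
    · intro hb; exact absurd (Finset.mem_univ b) hb
  · intro s _ hs
    apply Finset.sum_eq_zero
    intro t _
    simp [Matrix.single, Ne.symm hs]
  · intro ha; exact absurd (Finset.mem_univ a) ha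

lemma extLbl_self {lam : Finset X} (h : lam ⊆ lam) (a : Lbl lam) (u : Lbl (lam \ lam)) :
    extLbl h a u = a := by
  apply Equiv.ext; intro i
  apply Subtype.ext
  rw [extLbl_val, dif_pos i.isLt]

lemma card_lbl_empty_diff {lam : Finset X} : Fintype.card (Lbl (lam \ lam)) = 1 := by
  have hcard : (lam \ lam).card = 0 := by simp
  haveI h1 : IsEmpty (Fin (lam \ lam).card) := by rw [hcard]; infer_instance
  haveI h2 : IsEmpty {x // x ∈ lam \ lam} := by
    refine ⟨fun x => ?_⟩
    have := x.2
    simp at this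
  rw [Fintype.card_equiv (Equiv.equivOfIsEmpty _ _)]
  simp [hcard]

lemma blockE_self {lam : Finset X} (h : lam ⊆ lam) (a b : Lbl lam) :
    blockE h a b = Matrix.single a b 1 := by
  unfold blockE
  rw [Finset.sum_congr rfl (fun u _ => by rw [extLbl_self h a u, extLbl_self h b u])]
  rw [Finset.sum_const, Finset.card_univ, card_lbl_empty_diff, one_smul]

lemma card_filter_lt {N m : ℕ} (hm : m ≤ N) :
    (Finset.univ.filter fun i : Fin N => (i : ℕ) < m).card = m := by
  have : (Finset.univ.filter fun i : Fin N => (i : ℕ) < m)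
      = Finset.map ⟨Fin.castLE hm, Fin.castLE_injective hm⟩ Finset.univ := by
    ext i
    simp only [Finset.mem_filter, Finset.mem_univ, true_and, Finset.mem_map,
      Function.Embedding.coeFn_mk]
    constructor
    · intro hi; exact ⟨⟨i, hi⟩, Fin.ext rfl⟩
    · rintro ⟨a, -, rfl⟩
      exact a.isLt
  rw [this, Finset.card_map, Finset.card_univ, Fintype.card_fin]

lemma card_filter_mem {lam mu : Finset X} (h : lam ⊆ mu) (c : Lbl mu) :
    (Finset.univ.filter fun i : Fin mu.card => ((c i : X) ∈ lam)).card = lam.card := by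
  apply Finset.card_bij (fun i _ => ((c i : X)))
  · intro i hi; simpa using hi
  · intro i _ j _ hij
    exact c.injective (Subtype.ext hij)
  · intro x hx
    refine ⟨c.symm ⟨x, h hx⟩, ?_, ?_⟩
    · simp only [Finset.mem_filter, Finset.mem_univ, true_and, Equiv.apply_symm_apply]
      exact hx
    · simp

lemma mem_iff_lt_of_extLbl {lam mu : Finset X} (h : lam ⊆ mu) (t : Lbl lam)
    (v : Lbl (mu \ lam)) (i : Fin mu.card) :
    ((extLbl h t v i : X) ∈ lam) ↔ (i : ℕ) < lam.card := by
  rw [extLbl_val]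
  split_ifs with hi
  · exact iff_of_true (t ⟨i, hi⟩).2 hi
  · refine iff_of_false ?_ hi
    intro hmem
    exact (Finset.mem_sdiff.mp (v _).2).2 hmem

lemma cmb_inj2 {lam nu mu : Finset X} (h1 : lam ⊆ nu) (h2 : nu ⊆ mu)
    {u u' : Lbl (nu \ lam)} {r r' : Lbl (mu \ nu)}
    (he : cmb h1 h2 u r = cmb h1 h2 u' r') : u = u' ∧ r = r' := by
  obtain ⟨ha, hb⟩ := extLbl_inj2 _ he
  exact ⟨ha, (lblCast (sdiff_sdiff_eq h1 h2)).injective hb⟩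

lemma ite_sum_zero {ι M : Type*} [Fintype ι] [AddCommMonoid M] (c : Prop) [Decidable c]
    (f : ι → M) :
    (if c then ∑ r : ι, f r else 0) = ∑ r : ι, if c then f r else 0 := by
  split_ifs with h
  · rfl
  · simp

lemma blockE_mul {lam1 lam2 mu : Finset X} (h1 : lam1 ⊆ mu) (h2 : lam2 ⊆ mu)
    (s t : Lbl lam1) (p q : Lbl lam2) :
    blockE h1 s t * blockE h2 p q =
      ∑ v0 : Lbl ((lam1 ∪ lam2) \ lam1), ∑ w0 : Lbl ((lam1 ∪ lam2) \ lam2),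
        if extLbl (Finset.subset_union_left) t v0 = extLbl (Finset.subset_union_right) p w0
        then blockE (Finset.union_subset h1 h2)
          (extLbl (Finset.subset_union_left) s v0)
          (extLbl (Finset.subset_union_right) q w0)
        else 0 := by
  have eL1 : blockE h1 s t * blockE h2 p q =
      ∑ x : Lbl (mu \ lam1) × Lbl (mu \ lam2),
        if extLbl h1 t x.1 = extLbl h2 p x.2
        then Matrix.single (extLbl h1 s x.1) (extLbl h2 q x.2) (1 : ℂ) else 0 := by
    unfold blockE
    rw [Finset.sum_mul_sum]
    rw [Fintype.sum_prod_type]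
    exact Finset.sum_congr rfl fun v _ => Finset.sum_congr rfl fun w _ => stdMul _ _ _ _
  have eR1 : (∑ y : (Lbl ((lam1 ∪ lam2) \ lam1) × Lbl ((lam1 ∪ lam2) \ lam2)) ×
          Lbl (mu \ (lam1 ∪ lam2)),
        if extLbl (Finset.subset_union_left) t y.1.1
            = extLbl (Finset.subset_union_right) p y.1.2
        then Matrix.single
          (extLbl (Finset.union_subset h1 h2)
            (extLbl (Finset.subset_union_left) s y.1.1) y.2)
          (extLbl (Finset.union_subset h1 h2)
            (extLbl (Finset.subset_union_right) q y.1.2) y.2) (1 : ℂ) else 0) =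
      ∑ v0 : Lbl ((lam1 ∪ lam2) \ lam1), ∑ w0 : Lbl ((lam1 ∪ lam2) \ lam2),
        if extLbl (Finset.subset_union_left) t v0 = extLbl (Finset.subset_union_right) p w0
        then blockE (Finset.union_subset h1 h2)
          (extLbl (Finset.subset_union_left) s v0)
          (extLbl (Finset.subset_union_right) q w0)
        else 0 := by
    rw [Fintype.sum_prod_type]
    rw [Fintype.sum_prod_type]
    refine Finset.sum_congr rfl fun v0 _ => Finset.sum_congr rfl fun w0 _ => ?_
    exact (ite_sum_zero
      (extLbl (Finset.subset_union_left) t v0 = extLbl (Finset.subset_union_right) p w0)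
      (fun r : Lbl (mu \ (lam1 ∪ lam2)) => Matrix.single
        (extLbl (Finset.union_subset h1 h2) (extLbl (Finset.subset_union_left) s v0) r)
        (extLbl (Finset.union_subset h1 h2) (extLbl (Finset.subset_union_right) q w0) r)
        (1 : ℂ))).symm
  rw [eL1, ← eR1, ← Finset.sum_filter, ← Finset.sum_filter]
  have hU1 : lam1 ⊆ lam1 ∪ lam2 := Finset.subset_union_left
  have hU2 : lam2 ⊆ lam1 ∪ lam2 := Finset.subset_union_right
  have h3 : lam1 ∪ lam2 ⊆ mu := Finset.union_subset h1 h2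
  refine (Finset.sum_bij
    (fun (y : (Lbl ((lam1 ∪ lam2) \ lam1) × Lbl ((lam1 ∪ lam2) \ lam2)) ×
        Lbl (mu \ (lam1 ∪ lam2))) (_ : y ∈ _) =>
      ((cmb hU1 h3 y.1.1 y.2, cmb hU2 h3 y.1.2 y.2) :
        Lbl (mu \ lam1) × Lbl (mu \ lam2)))
    ?_ ?_ ?_ ?_).symm
  · -- maps into the filter
    rintro ⟨⟨v0, w0⟩, r⟩ hx
    simp only [Finset.mem_filter, Finset.mem_univ, true_and] at hx ⊢
    calc extLbl h1 t (cmb hU1 h3 v0 r)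
        = extLbl h3 (extLbl hU1 t v0) r := assoc_extLbl hU1 h3 t v0 r
      _ = extLbl h3 (extLbl hU2 p w0) r := by rw [hx]
      _ = extLbl h2 p (cmb hU2 h3 w0 r) := (assoc_extLbl hU2 h3 p w0 r).symm
  · -- injective
    intro y1 hy1 y2 hy2 he
    obtain ⟨⟨v0, w0⟩, r⟩ := y1
    obtain ⟨⟨v0', w0'⟩, r'⟩ := y2
    have h1' := congrArg Prod.fst he
    have h2' := congrArg Prod.snd he
    simp only at h1' h2'
    obtain ⟨hv, hr⟩ := cmb_inj2 hU1 h3 h1'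
    obtain ⟨hw, -⟩ := cmb_inj2 hU2 h3 h2'
    simp [hv, hw, hr]
  · -- surjective
    rintro ⟨v, w⟩ hvw
    simp only [Finset.mem_filter, Finset.mem_univ, true_and] at hvw
    set c : Lbl mu := extLbl h1 t v with hcdef
    have hc2 : c = extLbl h2 p w := hvw
    have hmem1 : ∀ i : Fin mu.card, ((c i : X) ∈ lam1) ↔ (i : ℕ) < lam1.card :=
      fun i => mem_iff_lt_of_extLbl h1 t v i
    have hmem2 : ∀ i : Fin mu.card, ((c i : X) ∈ lam2) ↔ (i : ℕ) < lam2.card := by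
      intro i
      rw [hc2]
      exact mem_iff_lt_of_extLbl h2 p w i
    have hal : ∀ i : Fin mu.card, ((c i : X) ∈ lam1 ∪ lam2) ↔
        (i : ℕ) < max lam1.card lam2.card := by
      intro i
      rw [Finset.mem_union, hmem1 i, hmem2 i]; omega
    have hmax_le : max lam1.card lam2.card ≤ mu.card := by
      have := Finset.card_le_card h1
      have := Finset.card_le_card h2
      omega
    have hM : (lam1 ∪ lam2).card = max lam1.card lam2.card := by
      have e1 : (Finset.univ.filter fun i : Fin mu.card => ((c i : X) ∈ lam1 ∪ lam2))
          = Finset.univ.filter fun i : Fin mu.card => (i : ℕ) < max lam1.card lam2.card := by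
        ext i
        simp only [Finset.mem_filter, Finset.mem_univ, true_and]
        exact hal i
      have h5 := card_filter_mem h3 c
      rw [e1, card_filter_lt hmax_le] at h5
      omega
    have H : ∀ i : Fin mu.card, ((c i : X) ∈ lam1 ∪ lam2) ↔ (i : ℕ) < (lam1 ∪ lam2).card := by
      intro i; rw [hM]; exact hal i
    obtain ⟨a, r, hc3⟩ := exists_decomp h3 c H
    have hacard : (lam1 ∪ lam2).card ≤ mu.card := Finset.card_le_card h3
    have haval : ∀ i : Fin (lam1 ∪ lam2).card,
        ((a i : X)) = ((c ⟨(i : ℕ), lt_of_lt_of_le i.isLt hacard⟩ : X)) := by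
      intro i
      rw [hc3, extLbl_val, dif_pos i.isLt]
    have Ha1 : ∀ i : Fin (lam1 ∪ lam2).card, ((a i : X) ∈ lam1) ↔ (i : ℕ) < lam1.card := by
      intro i
      rw [haval i]
      exact hmem1 _
    have Ha2 : ∀ i : Fin (lam1 ∪ lam2).card, ((a i : X) ∈ lam2) ↔ (i : ℕ) < lam2.card := by
      intro i
      rw [haval i]
      exact hmem2 _
    obtain ⟨t1, v0, ha1⟩ := exists_decomp hU1 a Ha1
    obtain ⟨p1, w0, ha2⟩ := exists_decomp hU2 a Ha2
    have heq1 : extLbl h1 t v = extLbl h1 t1 (cmb hU1 h3 v0 r) := by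
      rw [← hcdef, hc3, ha1]
      exact (assoc_extLbl hU1 h3 t1 v0 r).symm
    obtain ⟨ht1, hv1⟩ := extLbl_inj2 h1 heq1
    have heq2 : extLbl h2 p w = extLbl h2 p1 (cmb hU2 h3 w0 r) := by
      rw [← hc2, hc3, ha2]
      exact (assoc_extLbl hU2 h3 p1 w0 r).symm
    obtain ⟨hp1, hw1⟩ := extLbl_inj2 h2 heq2
    refine ⟨⟨⟨v0, w0⟩, r⟩, ?_, ?_⟩
    · simp only [Finset.mem_filter, Finset.mem_univ, true_and]
      show extLbl hU1 t v0 = extLbl hU2 p w0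
      rw [ht1, hp1]
      exact ha1.symm.trans ha2
    · simp only
      exact Prod.ext hv1.symm hw1.symm
  · -- values
    rintro ⟨⟨v0, w0⟩, r⟩ -
    simp only
    rw [assoc_extLbl hU1 h3 s v0 r, assoc_extLbl hU2 h3 q w0 r]

lemma iotaMat_apply_sum {lam mu : Finset X} {ι : Type*} (h : lam ⊆ mu) (s : Finset ι)
    (f : ι → Mlam lam) : iotaMat h (∑ i ∈ s, f i) = ∑ i ∈ s, iotaMat h (f i) :=
  map_sum (iotaMatL h) f s

lemma iotaMat_ite {lam mu : Finset X} (h : lam ⊆ mu) (c : Prop) [Decidable c] (M : Mlam lam) :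
    iotaMat h (if c then M else 0) = if c then iotaMat h M else 0 := by
  split_ifs with hc
  · rfl
  · exact map_zero (iotaMatL h)

lemma iotaMat_eq' {lam mu : Finset X} (h : lam ⊆ mu) (x : Mlam lam) :
    iotaMat h x = ∑ st : Lbl lam × Lbl lam, x st.1 st.2 • blockE h st.1 st.2 := by
  rw [iotaMat_eq]
  exact (Fintype.sum_prod_type
    (f := fun st : Lbl lam × Lbl lam => x st.1 st.2 • blockE h st.1 st.2)).symm

lemma iotaMat_mul {lam1 lam2 mu : Finset X} (h1 : lam1 ⊆ mu) (h2 : lam2 ⊆ mu)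
    (x : Mlam lam1) (y : Mlam lam2) :
    iotaMat h1 x * iotaMat h2 y =
      iotaMat (Finset.union_subset h1 h2)
        (iotaMat (Finset.subset_union_left) x * iotaMat (Finset.subset_union_right) y) := by
  have key : ∀ (st : Lbl lam1 × Lbl lam1) (pq : Lbl lam2 × Lbl lam2),
      blockE h1 st.1 st.2 * blockE h2 pq.1 pq.2 =
      iotaMat (Finset.union_subset h1 h2)
        (blockE (Finset.subset_union_left) st.1 st.2 *
          blockE (Finset.subset_union_right) pq.1 pq.2) := by
    intro st pq
    rw [blockE_mul h1 h2, blockE_mul Finset.subset_union_left Finset.subset_union_right,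
      iotaMat_apply_sum]
    refine Finset.sum_congr rfl fun v0 _ => ?_
    rw [iotaMat_apply_sum]
    refine Finset.sum_congr rfl fun w0 _ => ?_
    rw [iotaMat_ite, blockE_self, iotaMat_stdBasis]
  rw [iotaMat_eq' h1 x, iotaMat_eq' h2 y, Finset.sum_mul_sum,
    iotaMat_eq' (Finset.subset_union_left) x, iotaMat_eq' (Finset.subset_union_right) y,
    Finset.sum_mul_sum, iotaMat_apply_sum]
  refine Finset.sum_congr rfl fun st _ => ?_
  rw [iotaMat_apply_sum]
  refine Finset.sum_congr rfl fun pq _ => ?_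
  rw [smul_mul_smul_comm, smul_mul_smul_comm, iotaMat_smul, key st pq]

lemma blockE_star {lam mu : Finset X} (h : lam ⊆ mu) (s t : Lbl lam) :
    star (blockE h s t) = blockE h t s := by
  unfold blockE
  rw [star_sum]
  exact Finset.sum_congr rfl fun u _ => star_stdBasisMatrix' _ _

lemma iotaMat_star {lam mu : Finset X} (h : lam ⊆ mu) (x : Mlam lam) :
    iotaMat h (star x) = star (iotaMat h x) := by
  rw [iotaMat_eq, iotaMat_eq, star_sum, Finset.sum_comm]
  refine Finset.sum_congr rfl fun t _ => ?_
  rw [star_sum]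
  refine Finset.sum_congr rfl fun s _ => ?_
  rw [star_smul, blockE_star]
  congr 1

lemma iotaElem_coe (lam : Finset X) (x : Mlam lam) (mu : Finset X) :
    (iotaElem lam x : ∀ nu : Finset X, Mlam nu) mu
      = if h : lam ⊆ mu then iotaMat h x else 0 := rfl

lemma iotaElem_add (lam : Finset X) (x y : Mlam lam) :
    iotaElem lam (x + y) = iotaElem lam x + iotaElem lam y := by
  apply lp.ext
  funext mu
  rw [lp.coeFn_add]
  show (if h : lam ⊆ mu then iotaMat h (x + y) else 0) = _
  rw [Pi.add_apply, iotaElem_coe, iotaElem_coe]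
  split_ifs with h
  · exact iotaMat_add h x y
  · simp

lemma iotaElem_smul (lam : Finset X) (c : ℂ) (x : Mlam lam) :
    iotaElem lam (c • x) = c • iotaElem lam x := by
  apply lp.ext
  funext mu
  rw [lp.coeFn_smul]
  show (if h : lam ⊆ mu then iotaMat h (c • x) else 0) = _
  rw [Pi.smul_apply, iotaElem_coe]
  split_ifs with h
  · exact iotaMat_smul h c x
  · simp

lemma iotaElem_star (lam : Finset X) (x : Mlam lam) :
    star (iotaElem lam x) = iotaElem lam (star x) := by
  apply lp.ext
  funext mu
  rw [lp.coeFn_star]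
  show _ = (if h : lam ⊆ mu then iotaMat h (star x) else 0)
  rw [Pi.star_apply, iotaElem_coe]
  split_ifs with h
  · exact (iotaMat_star h x).symm
  · simp

lemma iotaElem_mul {lam1 lam2 : Finset X} (x : Mlam lam1) (y : Mlam lam2) :
    iotaElem lam1 x * iotaElem lam2 y =
      iotaElem (lam1 ∪ lam2)
        (iotaMat (Finset.subset_union_left) x * iotaMat (Finset.subset_union_right) y) := by
  apply lp.ext
  funext nu
  rw [lp.infty_coeFn_mul, Pi.mul_apply, iotaElem_coe, iotaElem_coe, iotaElem_coe]
  by_cases h1 : lam1 ⊆ nu <;> by_cases h2 : lam2 ⊆ nu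
  · rw [dif_pos h1, dif_pos h2, dif_pos (Finset.union_subset h1 h2)]
    exact iotaMat_mul h1 h2 x y
  · rw [dif_pos h1, dif_neg h2, dif_neg (fun h => h2 ((Finset.subset_union_right).trans h)),
      mul_zero]
  · rw [dif_neg h1, dif_neg (fun h => h1 ((Finset.subset_union_left).trans h)), zero_mul]
  · rw [dif_neg h1, dif_neg (fun h => h1 ((Finset.subset_union_left).trans h)), zero_mul]

/-- `ι_λ` as a linear map into `∏_μ M_μ`. -/
def iotaL (lam : Finset X) : Mlam lam →ₗ[ℂ] ProdM X where
  toFun := iotaElem lam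
  map_add' := iotaElem_add lam
  map_smul' := iotaElem_smul lam

lemma nlam_eq_range (lam : Finset X) :
    Nlam lam = (LinearMap.range (iotaL lam) : Set (ProdM X)) := by
  rfl

lemma mem_gen_iff {mu : Finset X} {v : ProdM X} :
    v ∈ (⋃ lam : Finset X, ⋃ (_ : lam ⊆ mu), Nlam lam) ↔
      ∃ lam : Finset X, lam ⊆ mu ∧ ∃ x : Mlam lam, iotaElem lam x = v := by
  simp [Nlam, Set.mem_iUnion]

lemma gen_mul {mu : Finset X} {u v : ProdM X}
    (hu : u ∈ (⋃ lam : Finset X, ⋃ (_ : lam ⊆ mu), Nlam lam))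
    (hv : v ∈ (⋃ lam : Finset X, ⋃ (_ : lam ⊆ mu), Nlam lam)) :
    u * v ∈ (⋃ lam : Finset X, ⋃ (_ : lam ⊆ mu), Nlam lam) := by
  rw [mem_gen_iff] at hu hv ⊢
  obtain ⟨lam1, hs1, x, rfl⟩ := hu
  obtain ⟨lam2, hs2, y, rfl⟩ := hv
  exact ⟨lam1 ∪ lam2, Finset.union_subset hs1 hs2, _, (iotaElem_mul x y).symm⟩

lemma mul_mem_NspanUpTo (mu : Finset X) {a b : ProdM X}
    (ha : a ∈ NspanUpTo mu) (hb : b ∈ NspanUpTo mu) : a * b ∈ NspanUpTo mu := by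
  have step1 : ∀ u ∈ (⋃ lam : Finset X, ⋃ (_ : lam ⊆ mu), Nlam lam),
      ∀ {c : ProdM X}, c ∈ NspanUpTo mu → u * c ∈ NspanUpTo mu := by
    intro u hu c hc
    refine Submodule.span_induction ?_ ?_ ?_ ?_ hc
    · intro v hv
      exact Submodule.subset_span (gen_mul hu hv)
    · rw [mul_zero]; exact Submodule.zero_mem _
    · intro x y _ _ hx hy
      rw [mul_add]; exact Submodule.add_mem _ hx hy
    · intro r x _ hx
      rw [mul_smul_comm]; exact Submodule.smul_mem _ r hx
  refine Submodule.span_induction ?_ ?_ ?_ ?_ ha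
  · intro u hu
    exact step1 u hu hb
  · rw [zero_mul]; exact Submodule.zero_mem _
  · intro x y _ _ hx hy
    rw [add_mul]; exact Submodule.add_mem _ hx hy
  · intro r x _ hx
    rw [smul_mul_assoc]; exact Submodule.smul_mem _ r hx

lemma star_mem_NspanUpTo (mu : Finset X) {a : ProdM X}
    (ha : a ∈ NspanUpTo mu) : star a ∈ NspanUpTo mu := by
  refine Submodule.span_induction ?_ ?_ ?_ ?_ ha
  · intro v hv
    rw [mem_gen_iff] at hv
    obtain ⟨lam, hs, x, rfl⟩ := hv
    rw [iotaElem_star]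
    exact Submodule.subset_span (mem_gen_iff.mpr ⟨lam, hs, _, rfl⟩)
  · rw [star_zero]; exact Submodule.zero_mem _
  · intro x y _ _ hx hy
    rw [star_add]; exact Submodule.add_mem _ hx hy
  · intro r x _ hx
    rw [star_smul]; exact Submodule.smul_mem _ (star r) hx

/-- `A_μ` as a non-unital star subalgebra. -/
def upToAlg (mu : Finset X) : NonUnitalStarSubalgebra ℂ (ProdM X) where
  carrier := (NspanUpTo mu : Set (ProdM X))
  add_mem' := fun ha hb => Submodule.add_mem _ ha hb
  zero_mem' := Submodule.zero_mem _
  smul_mem' := fun c _ hx => Submodule.smul_mem _ c hx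
  mul_mem' := fun ha hb => mul_mem_NspanUpTo mu ha hb
  star_mem' := fun ha => star_mem_NspanUpTo mu ha

lemma finiteDimensional_NspanUpTo (mu : Finset X) :
    FiniteDimensional ℂ (NspanUpTo (X := X) mu) := by
  have hle : NspanUpTo mu ≤
      ⨆ lam : mu.powerset, LinearMap.range (iotaL (lam : Finset X)) := by
    refine Submodule.span_le.mpr ?_
    intro x hx
    rw [mem_gen_iff] at hx
    obtain ⟨lam, hsub, y, rfl⟩ := hx
    exact Submodule.mem_iSup_of_mem ⟨lam, Finset.mem_powerset.mpr hsub⟩ ⟨y, rfl⟩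
  exact Submodule.finiteDimensional_of_le hle

lemma NspanUpTo_mono {lam mu : Finset X} (h : lam ⊆ mu) :
    NspanUpTo (X := X) lam ≤ NspanUpTo mu := by
  apply Submodule.span_mono
  intro x hx
  rw [mem_gen_iff] at hx ⊢
  obtain ⟨l, hl, y, rfl⟩ := hx
  exact ⟨l, hl.trans h, y, rfl⟩

lemma iUnion_NspanUpTo :
    (⋃ mu : Finset X, ((NspanUpTo mu : Submodule ℂ (ProdM X)) : Set (ProdM X)))
      = ((Nspan X : Submodule ℂ (ProdM X)) : Set (ProdM X)) := by
  apply Set.Subset.antisymm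
  · refine Set.iUnion_subset fun mu => ?_
    have : NspanUpTo mu ≤ Nspan X := by
      apply Submodule.span_mono
      intro x hx
      rw [mem_gen_iff] at hx
      obtain ⟨l, _, y, rfl⟩ := hx
      exact Set.mem_iUnion.mpr ⟨l, ⟨y, rfl⟩⟩
    exact this
  · intro x hx
    refine Submodule.span_induction ?_ ?_ ?_ ?_ hx
    · intro v hv
      obtain ⟨lam, hv⟩ := Set.mem_iUnion.mp hv
      exact Set.mem_iUnion.mpr ⟨lam, Submodule.subset_span
        (mem_gen_iff.mpr (by
          rw [Nlam] at hv
          obtain ⟨y, rfl⟩ := hv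
          exact ⟨lam, Finset.Subset.refl lam, y, rfl⟩))⟩
    · exact Set.mem_iUnion.mpr ⟨∅, Submodule.zero_mem _⟩
    · intro a b _ _ hA hB
      obtain ⟨mu1, hA⟩ := Set.mem_iUnion.mp hA
      obtain ⟨mu2, hB⟩ := Set.mem_iUnion.mp hB
      exact Set.mem_iUnion.mpr ⟨mu1 ∪ mu2, Submodule.add_mem _
        (NspanUpTo_mono Finset.subset_union_left hA)
        (NspanUpTo_mono Finset.subset_union_right hB)⟩
    · intro r a _ hA
      obtain ⟨mu1, hA⟩ := Set.mem_iUnion.mp hA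
      exact Set.mem_iUnion.mpr ⟨mu1, Submodule.smul_mem _ r hA⟩


/- STATEMENT 15: each `A_μ = Σ_{λ⊆μ} N_λ` is a finite-dimensional *-subalgebra, the
family is directed (`A_λ ⊆ A_μ` for `λ ⊆ μ`), and the closure of `⋃_μ A_μ` is `A`;
consequently `A` is an AF-algebra. -/
theorem stmt15 [Uncountable X] :
    (∀ mu : Finset X,
      ∃ S : NonUnitalStarSubalgebra ℂ (ProdM X),
        (S : Set (ProdM X)) = ((NspanUpTo mu : Submodule ℂ (ProdM X)) : Set (ProdM X)) ∧
        FiniteDimensional ℂ (NspanUpTo (X := X) mu)) ∧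
    (∀ lam mu : Finset X, lam ⊆ mu → NspanUpTo (X := X) lam ≤ NspanUpTo mu) ∧
    closure (⋃ mu : Finset X,
      ((NspanUpTo mu : Submodule ℂ (ProdM X)) : Set (ProdM X))) = carrierA X := by
  refine ⟨fun mu => ⟨upToAlg mu, rfl, finiteDimensional_NspanUpTo mu⟩,
    fun lam mu h => NspanUpTo_mono h, ?_⟩
  rw [iUnion_NspanUpTo]
  rfl

end
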